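/- arXiv:2010.00894 — 2 statements merged into one kernel-verified Lean document; each statement's English description precedes it below -/
import Mathlib

section
/- Let V be a finite set and w : V → ℕ. Then Σ_{U ⊆ V, |U| even} (Π_{v ∈ U} N⁻(w(v))) · (Π_{v ∈ V∖U} N⁺(w(v))) = N⁺(Σ_{v ∈ V} w(v)), where the sum is over all subsets U of V of even cardinality. -/
open Finset

/-- `Nplus m = 2^(m-1)(2^m + 1)` is the number of even theta-characteristics
on a smooth curve of genus `m`. -/
def Nplus (m : ℕ) : ℕ := (4 ^ m + 2 ^ m) / 2

/-- `Nminus m = 2^(m-1)(2^m - 1)` is the number of odd theta-characteristics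
on a smooth curve of genus `m`. -/
def Nminus (m : ℕ) : ℕ := (4 ^ m - 2 ^ m) / 2

lemma twoM (m : ℕ) : 2 * Nminus m + 2 ^ m = 4 ^ m := by
  have h1 : (2:ℕ) ^ m ≤ 4 ^ m := Nat.pow_le_pow_left (by norm_num) m
  have h2 : 2 ∣ 4 ^ m - 2 ^ m := by
    rcases m with _ | n
    · simp
    · exact Nat.dvd_sub (dvd_pow (by norm_num) (Nat.succ_ne_zero n))
        (dvd_pow (by norm_num) (Nat.succ_ne_zero n))
  unfold Nminus
  omega

lemma twoP (m : ℕ) : 2 * Nplus m = 4 ^ m + 2 ^ m := by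
  have h2 : 2 ∣ 4 ^ m + 2 ^ m := by
    rcases m with _ | n
    · simp
    · exact Nat.dvd_add (dvd_pow (by norm_num) (Nat.succ_ne_zero n))
        (dvd_pow (by norm_num) (Nat.succ_ne_zero n))
  unfold Nplus
  omega

lemma PM (m : ℕ) : Nplus m = Nminus m + 2 ^ m := by
  have := twoM m; have := twoP m; omega

lemma keyP (x y : ℕ) : Nplus x * Nplus y + Nminus x * Nminus y = Nplus (x + y) := by
  have h1 := twoM x
  have h2 := twoM y
  have h3 := twoM (x + y)
  have e1 : (2 * Nminus x + 2 ^ x) * (2 * Nminus y + 2 ^ y) = 4 ^ x * 4 ^ y := by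
    rw [h1, h2]
  have e2 : (4:ℕ) ^ x * 4 ^ y = 4 ^ (x + y) := (pow_add 4 x y).symm
  have e3 : (2:ℕ) ^ x * 2 ^ y = 2 ^ (x + y) := (pow_add 2 x y).symm
  rw [PM x, PM y, PM (x + y)]
  nlinarith [e1, e2, e3, h3]

lemma keyM (x y : ℕ) : Nminus x * Nplus y + Nplus x * Nminus y = Nminus (x + y) := by
  have h1 := twoM x
  have h2 := twoM y
  have h3 := twoM (x + y)
  have e1 : (2 * Nminus x + 2 ^ x) * (2 * Nminus y + 2 ^ y) = 4 ^ x * 4 ^ y := by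
    rw [h1, h2]
  have e2 : (4:ℕ) ^ x * 4 ^ y = 4 ^ (x + y) := (pow_add 4 x y).symm
  have e3 : (2:ℕ) ^ x * 2 ^ y = 2 ^ (x + y) := (pow_add 2 x y).symm
  rw [PM x, PM y]
  nlinarith [e1, e2, e3, h3]

lemma aux {V : Type*} [DecidableEq V] (w : V → ℕ) (s : Finset V) :
    (∑ U ∈ s.powerset.filter (fun U => Even U.card),
        (∏ v ∈ U, Nminus (w v)) * ∏ v ∈ s \ U, Nplus (w v)) = Nplus (∑ v ∈ s, w v) ∧
    (∑ U ∈ s.powerset.filter (fun U => ¬ Even U.card),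
        (∏ v ∈ U, Nminus (w v)) * ∏ v ∈ s \ U, Nplus (w v)) = Nminus (∑ v ∈ s, w v) := by
  induction s using Finset.induction_on with
  | empty => constructor <;> simp [Finset.filter_singleton, Nplus, Nminus]
  | @insert a s ha ih =>
    obtain ⟨hE, hO⟩ := ih
    have key : ∀ (p : ℕ → Prop) [DecidablePred p],
        (∑ U ∈ (insert a s).powerset.filter (fun U => p U.card),
          (∏ v ∈ U, Nminus (w v)) * ∏ v ∈ (insert a s) \ U, Nplus (w v)) =
        Nplus (w a) * (∑ U ∈ s.powerset.filter (fun U => p U.card),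
          (∏ v ∈ U, Nminus (w v)) * ∏ v ∈ s \ U, Nplus (w v)) +
        Nminus (w a) * (∑ U ∈ s.powerset.filter (fun U => p (U.card + 1)),
          (∏ v ∈ U, Nminus (w v)) * ∏ v ∈ s \ U, Nplus (w v)) := by
      intro p _
      rw [Finset.sum_filter, Finset.sum_powerset_insert ha]
      congr 1
      · rw [Finset.mul_sum, Finset.sum_filter]
        refine Finset.sum_congr rfl fun U hU => ?_
        have hU' : U ⊆ s := Finset.mem_powerset.mp hU
        have haU : a ∉ U := fun h => ha (hU' h)
        have hins : insert a s \ U = insert a (s \ U) :=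
          Finset.insert_sdiff_of_notMem _ haU
        have haSD : a ∉ s \ U := fun h => ha (Finset.mem_sdiff.mp h).1
        split_ifs with h
        · rw [hins, Finset.prod_insert haSD]; ring
        · ring
      · rw [Finset.mul_sum, Finset.sum_filter]
        refine Finset.sum_congr rfl fun U hU => ?_
        have hU' : U ⊆ s := Finset.mem_powerset.mp hU
        have haU : a ∉ U := fun h => ha (hU' h)
        have hcard : (insert a U).card = U.card + 1 := Finset.card_insert_of_notMem haU
        have hdiff : insert a s \ insert a U = s \ U := by
          ext x
          simp only [Finset.mem_sdiff, Finset.mem_insert, not_or]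
          constructor
          · rintro ⟨h1 | h1, h2, h3⟩
            · exact absurd h1 h2
            · exact ⟨h1, h3⟩
          · rintro ⟨h1, h2⟩
            exact ⟨Or.inr h1, fun hx => ha (hx ▸ h1), h2⟩
        rw [hcard, hdiff, Finset.prod_insert haU]
        split_ifs with h <;> ring
    constructor
    · rw [key Even]
      simp only [Nat.even_add_one]
      rw [hE, hO, Finset.sum_insert ha]
      have := keyP (w a) (∑ v ∈ s, w v)
      linarith
    · rw [key (fun n => ¬ Even n)]
      simp only [Nat.even_add_one, not_not]
      rw [hE, hO, Finset.sum_insert ha]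
      have := keyM (w a) (∑ v ∈ s, w v)
      linarith

/-- The number of even spin structures: the sum over even-cardinality subsets `U` of `V`
of `∏_{v∈U} N⁻(w v) · ∏_{v∉U} N⁺(w v)` equals `N⁺(∑ w v)`. -/
theorem even_spin_count (V : Type*) [Fintype V] [DecidableEq V] (w : V → ℕ) :
    ∑ U ∈ Finset.univ.powerset.filter (fun U : Finset V => Even U.card),
        (∏ v ∈ U, Nminus (w v)) * (∏ v ∈ Uᶜ, Nplus (w v)) =
      Nplus (∑ v, w v) := by
  have h := (aux w (Finset.univ : Finset V)).1
  rw [← h]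
  refine Finset.sum_congr rfl fun U hU => ?_
  rw [Finset.compl_eq_univ_sdiff]
end

section
/- Let (V, E, s, t) be a finite multigraph and let P, P' ⊆ E be cyclic subsets. Then their symmetric difference P △ P' is cyclic, and the integer-valued function F_P + F_{P'} − F_{P △ P'} on V ⊔ E equals Σ_{e ∈ P ∩ P'} D_e, where D_e is the function on V ⊔ E with D_e(v) = |{s(e), t(e)} ∩ {v}| counted with multiplicity (i.e. D_e(v) = [s(e) = v] + [t(e) = v]) for v ∈ V, D_e(e) = −2, and D_e(e') = 0 for e' ≠ e. -/
open Finset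

/-- For a finite multigraph `(V, E, s, t)`, the number of edges of `P ⊆ E` incident to a
vertex `v`, with loops counting twice. -/
def degIn (V E : Type*) [Fintype E] [DecidableEq V] (s t : E → V) (P : Finset E) (v : V) : ℕ :=
  (P.filter (fun e => s e = v)).card + (P.filter (fun e => t e = v)).card

/-- The divisor `F_P` associated to a cyclic subset `P ⊆ E`: coefficient `deg_P(v)/2` at a
vertex `v`, coefficient `-1` at the midpoint of an edge `e ∈ P` and `0` elsewhere. -/
def FP (V E : Type*) [Fintype E] [DecidableEq V] [DecidableEq E] (s t : E → V)
    (P : Finset E) : V ⊕ E → ℤ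
  | .inl v => (degIn V E s t P v : ℤ) / 2
  | .inr e => if e ∈ P then -1 else 0

/-- The principal divisor `D_e = div(f_e) = s(e) + t(e) - 2 p_e` associated to an edge `e`. -/
def De (V E : Type*) [DecidableEq V] [DecidableEq E] (s t : E → V) (e : E) : V ⊕ E → ℤ
  | .inl v => (if s e = v then 1 else 0) + (if t e = v then 1 else 0)
  | .inr e' => if e' = e then -2 else 0

lemma card_symmDiff' {E : Type*} [DecidableEq E] (A B : Finset E) :
    ((symmDiff A B).card : ℤ) = A.card + B.card - 2 * (A ∩ B).card := by
  have h1 : symmDiff A B = (A ∪ B) \ (A ∩ B) := by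
    ext x; simp [Finset.mem_symmDiff]; tauto
  have h2 : (A ∩ B) ⊆ (A ∪ B) := (Finset.inter_subset_left).trans Finset.subset_union_left
  have h3 := Finset.card_union_add_card_inter A B
  have h4 : (symmDiff A B).card = (A ∪ B).card - (A ∩ B).card := by
    rw [h1, Finset.card_sdiff_of_subset h2]
  have h5 := Finset.card_le_card h2
  omega

lemma filter_symmDiff' {E : Type*} [DecidableEq E] (A B : Finset E) (p : E → Prop)
    [DecidablePred p] :
    (symmDiff A B).filter p = symmDiff (A.filter p) (B.filter p) := by
  ext x; simp [Finset.mem_symmDiff, Finset.mem_filter]; tauto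

lemma degIn_symmDiff (V E : Type*) [Fintype E] [DecidableEq V] [DecidableEq E]
    (s t : E → V) (P P' : Finset E) (v : V) :
    (degIn V E s t (symmDiff P P') v : ℤ) =
      degIn V E s t P v + degIn V E s t P' v - 2 * degIn V E s t (P ∩ P') v := by
  unfold degIn
  rw [filter_symmDiff', filter_symmDiff', Finset.filter_inter_distrib, Finset.filter_inter_distrib]
  push_cast [card_symmDiff']
  ring

/-- If `P` and `P'` are cyclic subsets of edges, then their symmetric difference `P ∆ P'` is
cyclic, and `F_P + F_{P'} - F_{P ∆ P'} = ∑_{e ∈ P ∩ P'} D_e`. -/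
theorem FP_add_FP' (V E : Type*) [Fintype V] [Fintype E] [DecidableEq V] [DecidableEq E]
    (s t : E → V) (P P' : Finset E)
    (hP : ∀ v, Even (degIn V E s t P v)) (hP' : ∀ v, Even (degIn V E s t P' v)) :
    (∀ v, Even (degIn V E s t (symmDiff P P') v)) ∧
      ∀ x : V ⊕ E,
        FP V E s t P x + FP V E s t P' x - FP V E s t (symmDiff P P') x =
          ∑ e ∈ P ∩ P', De V E s t e x := by
  constructor
  · intro v
    have key := degIn_symmDiff V E s t P P' v
    obtain ⟨a, ha⟩ := hP v
    obtain ⟨b, hb⟩ := hP' v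
    rw [Nat.even_iff]
    omega
  · rintro (v | e)
    · have key := degIn_symmDiff V E s t P P' v
      have rhs : ∑ e ∈ P ∩ P', De V E s t e (Sum.inl v) =
          (degIn V E s t (P ∩ P') v : ℤ) := by
        simp only [De, degIn, Finset.sum_add_distrib, Finset.sum_boole]
        push_cast
        ring
      simp only [FP, rhs]
      obtain ⟨a, ha⟩ := hP v
      obtain ⟨b, hb⟩ := hP' v
      omega
    · have rhs : ∑ e' ∈ P ∩ P', De V E s t e' (Sum.inr e) =
          if e ∈ P ∩ P' then -2 else 0 := by
        simp only [De]
        rw [Finset.sum_ite_eq (P ∩ P') e (fun _ => (-2 : ℤ))]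
      simp only [FP, rhs, Finset.mem_inter, Finset.mem_symmDiff]
      by_cases h1 : e ∈ P <;> by_cases h2 : e ∈ P' <;> simp [h1, h2]
end
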